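/- Let n ≥ 4 be an even integer. Then the DCT-II matrix satisfies the factorization C^II_n = P_n^T · blkdiag(C^II_{n/2}, C^IV_{n/2}) · H_n, where blkdiag(A,B) denotes the block-diagonal matrix with diagonal blocks A and B. -/

import Mathlib

open Matrix Real

/-- `ε_n(j)`: `1/√2` if `j = 0` or `j = n`, else `1`. -/
noncomputable def eps (n j : ℕ) : ℝ := if j = 0 ∨ j = n then 1 / Real.sqrt 2 else 1

/-- DCT-I matrix of size `(n+1) × (n+1)`. -/
noncomputable def C1 (n : ℕ) : Matrix (Fin (n + 1)) (Fin (n + 1)) ℝ := fun j k =>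
  Real.sqrt (2 / n) * eps n j.val * eps n k.val *
    Real.cos (((j.val * k.val : ℕ) : ℝ) * Real.pi / n)

/-- DCT-II matrix of size `n × n`. -/
noncomputable def C2 (n : ℕ) : Matrix (Fin n) (Fin n) ℝ := fun j k =>
  Real.sqrt (2 / n) * eps n j.val *
    Real.cos (((j.val * (2 * k.val + 1) : ℕ) : ℝ) * Real.pi / (2 * n))

/-- DCT-III matrix: transpose of DCT-II. -/
noncomputable def C3 (n : ℕ) : Matrix (Fin n) (Fin n) ℝ := (C2 n)ᵀ

/-- DCT-IV matrix of size `n × n`. -/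
noncomputable def C4 (n : ℕ) : Matrix (Fin n) (Fin n) ℝ := fun j k =>
  Real.sqrt (2 / n) *
    Real.cos ((((2 * j.val + 1) * (2 * k.val + 1) : ℕ) : ℝ) * Real.pi / (4 * n))

/-- Block-diagonal matrix with diagonal blocks `A` (size `p`) and `B` (size `q`),
viewed as a matrix of size `n` (intended for `n = p + q`). -/
noncomputable def blkdiag {n p q : ℕ} (A : Matrix (Fin p) (Fin p) ℝ)
    (B : Matrix (Fin q) (Fin q) ℝ) : Matrix (Fin n) (Fin n) ℝ := fun i j =>
  if hi : i.val < p then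
    if hj : j.val < p then A ⟨i.val, hi⟩ ⟨j.val, hj⟩ else 0
  else
    if j.val < p then 0
    else
      if hi' : i.val - p < q then
        if hj' : j.val - p < q then B ⟨i.val - p, hi'⟩ ⟨j.val - p, hj'⟩ else 0
      else 0

/-- `2×2` block matrix `[[A, B], [C, D]]` with square blocks of size `p`,
viewed as a matrix of size `n` (intended for `n = p + p`). -/
noncomputable def blk4 {n p : ℕ} (A B C D : Matrix (Fin p) (Fin p) ℝ) :
    Matrix (Fin n) (Fin n) ℝ := fun i j =>
  if hi : i.val < p then
    if hj : j.val < p then A ⟨i.val, hi⟩ ⟨j.val, hj⟩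
    else if hj' : j.val - p < p then B ⟨i.val, hi⟩ ⟨j.val - p, hj'⟩ else 0
  else if hi' : i.val - p < p then
    if hj : j.val < p then C ⟨i.val - p, hi'⟩ ⟨j.val, hj⟩
    else if hj' : j.val - p < p then D ⟨i.val - p, hi'⟩ ⟨j.val - p, hj'⟩ else 0
  else 0

/-- Flip (anti-diagonal) matrix `Ĩ_m`. -/
noncomputable def flipMat (m : ℕ) : Matrix (Fin m) (Fin m) ℝ := fun i j =>
  if i.val + j.val + 1 = m then 1 else 0

/-- Diagonal sign matrix `D_m = diag((-1)^k)`. -/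
noncomputable def Dmat (m : ℕ) : Matrix (Fin m) (Fin m) ℝ :=
  Matrix.diagonal fun k => (-1 : ℝ) ^ (k.val)

/-- Even-odd permutation matrix `P_n` for even `n`:
`P_n x = (x_0, x_2, …, x_{n-2}, x_1, x_3, …, x_{n-1})`. -/
noncomputable def Pev (n : ℕ) : Matrix (Fin n) (Fin n) ℝ := fun i j =>
  if j.val = (if i.val < n / 2 then 2 * i.val else 2 * (i.val - n / 2) + 1) then 1 else 0

/-- Even-odd permutation matrix `P_{n+1}` of odd size `n+1` (for even `n`):
`P_{n+1} x = (x_0, x_2, …, x_n, x_1, x_3, …, x_{n-1})`. -/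
noncomputable def Podd (n : ℕ) : Matrix (Fin (n + 1)) (Fin (n + 1)) ℝ := fun i j =>
  if j.val = (if i.val ≤ n / 2 then 2 * i.val else 2 * (i.val - n / 2) - 1) then 1 else 0

/-- Butterfly matrix `H_n = (1/√2)[[I, Ĩ], [I, -Ĩ]]` with blocks of size `n/2`. -/
noncomputable def Hmat (n : ℕ) : Matrix (Fin n) (Fin n) ℝ :=
  (1 / Real.sqrt 2) •
    blk4 (1 : Matrix (Fin (n / 2)) (Fin (n / 2)) ℝ) (flipMat (n / 2)) 1 (-(flipMat (n / 2)))

/-- Butterfly matrix `Ĥ_{n+1} = (1/√2)[[I, 0, Ĩ], [0, √2, 0], [I, 0, -Ĩ]]`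
with corner blocks of size `n/2` and middle row/column indexed by `n/2`. -/
noncomputable def Hbrev (n : ℕ) : Matrix (Fin (n + 1)) (Fin (n + 1)) ℝ := fun i j =>
  (1 / Real.sqrt 2) *
    (if i.val < n / 2 then
      (if j.val < n / 2 then (if i.val = j.val then 1 else 0)
       else if j.val = n / 2 then 0
       else if i.val + (j.val - (n / 2 + 1)) + 1 = n / 2 then 1 else 0)
     else if i.val = n / 2 then (if j.val = n / 2 then Real.sqrt 2 else 0)
     else
      (if j.val < n / 2 then (if i.val - (n / 2 + 1) = j.val then 1 else 0)
       else if j.val = n / 2 then 0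
       else -(if (i.val - (n / 2 + 1)) + (j.val - (n / 2 + 1)) + 1 = n / 2 then 1 else 0)))

/-- The matrix `U_n`. -/
noncomputable def Umat (n : ℕ) : Matrix (Fin n) (Fin n) ℝ :=
  (blkdiag (n := n) (1 : Matrix (Fin 1) (Fin 1) ℝ)
    (blkdiag (n := n - 1)
      ((1 / Real.sqrt 2) • blk4 (n := n - 2)
        (1 : Matrix (Fin (n / 2 - 1)) (Fin (n / 2 - 1)) ℝ) 1 1 (-1))
      (-1 : Matrix (Fin 1) (Fin 1) ℝ))) *
  blkdiag (n := n) (1 : Matrix (Fin (n / 2)) (Fin (n / 2)) ℝ) (Dmat (n / 2) * flipMat (n / 2))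

/-- The rotation/rotation-reflection matrix `R_n`. -/
noncomputable def Rmat (n : ℕ) : Matrix (Fin n) (Fin n) ℝ :=
  blkdiag (n := n) (1 : Matrix (Fin (n / 2)) (Fin (n / 2)) ℝ) (Dmat (n / 2)) *
  blk4 (n := n)
    (Matrix.diagonal fun k : Fin (n / 2) =>
      Real.cos (((2 * k.val + 1 : ℕ) : ℝ) * Real.pi / (4 * n)))
    ((Matrix.diagonal fun k : Fin (n / 2) =>
      Real.sin (((2 * k.val + 1 : ℕ) : ℝ) * Real.pi / (4 * n))) * flipMat (n / 2))
    (-(flipMat (n / 2) * Matrix.diagonal fun k : Fin (n / 2) =>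
      Real.sin (((2 * k.val + 1 : ℕ) : ℝ) * Real.pi / (4 * n))))
    (Matrix.diagonal fun k : Fin (n / 2) =>
      Real.cos (((2 * (n / 2 - 1 - k.val) + 1 : ℕ) : ℝ) * Real.pi / (4 * n)))

/-!
Put `n = m + m`. Since `√(2/n) = √(2/m)/√2` and `ε_n(2a) = ε_m(a)`, the entry of `C^II_n`
in row `2a` and column `k < m` is the entry `(a, k)` of `C^II_m` divided by `√2`; in row `2a + 1`
it is the entry `(a, k)` of `C^IV_m` divided by `√2`. The reflection `k ↦ n - 1 - k` of the
columns multiplies `cos(j(2k+1)π/(2n))` by `(-1)^j`, because `2(n - 1 - k) + 1 = 2n - (2k + 1)`.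
The butterfly `H_n` encodes exactly this symmetry of the last `m` columns, and `P_nᵀ` interleaves
the even and odd rows.
-/

section BlockMatrices

variable {p q : ℕ}

section Diagonal

variable (A : Matrix (Fin p) (Fin p) ℝ) (B : Matrix (Fin q) (Fin q) ℝ)

lemma blkdiag_castAdd_castAdd (i j : Fin p) :
    blkdiag (n := p + q) A B (Fin.castAdd q i) (Fin.castAdd q j) = A i j := by
  simp [blkdiag]

lemma blkdiag_castAdd_natAdd (i : Fin p) (j : Fin q) :
    blkdiag (n := p + q) A B (Fin.castAdd q i) (Fin.natAdd p j) = 0 := by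
  simp [blkdiag]

lemma blkdiag_natAdd_castAdd (i : Fin q) (j : Fin p) :
    blkdiag (n := p + q) A B (Fin.natAdd p i) (Fin.castAdd q j) = 0 := by
  simp [blkdiag]

lemma blkdiag_natAdd_natAdd (i j : Fin q) :
    blkdiag (n := p + q) A B (Fin.natAdd p i) (Fin.natAdd p j) = B i j := by
  simp [blkdiag]

end Diagonal

variable (A B C D : Matrix (Fin p) (Fin p) ℝ)

lemma blk4_castAdd_castAdd (i j : Fin p) :
    blk4 (n := p + p) A B C D (Fin.castAdd p i) (Fin.castAdd p j) = A i j := by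
  simp [blk4]

lemma blk4_castAdd_natAdd (i j : Fin p) :
    blk4 (n := p + p) A B C D (Fin.castAdd p i) (Fin.natAdd p j) = B i j := by
  simp [blk4]

lemma blk4_natAdd_castAdd (i j : Fin p) :
    blk4 (n := p + p) A B C D (Fin.natAdd p i) (Fin.castAdd p j) = C i j := by
  simp [blk4]

lemma blk4_natAdd_natAdd (i j : Fin p) :
    blk4 (n := p + p) A B C D (Fin.natAdd p i) (Fin.natAdd p j) = D i j := by
  simp [blk4]

end BlockMatrices

lemma flipMat_apply {m : ℕ} (i j : Fin m) : flipMat m i j = if i = j.rev then 1 else 0 := by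
  simp only [flipMat, Fin.ext_iff, Fin.val_rev]
  exact if_congr (by omega) rfl rfl

lemma Fin.natAdd_eq_rev_castAdd_rev {m : ℕ} (l : Fin m) :
    Fin.natAdd m l = (Fin.castAdd m l.rev).rev := by
  rw [Fin.rev_castAdd, Fin.rev_rev, Fin.natAdd_eq_addNat]

lemma Hmat_add_self (m : ℕ) :
    Hmat (m + m) = (1 / √2) • blk4 (n := m + m) (1 : Matrix (Fin m) (Fin m) ℝ) (flipMat m) 1
      (-flipMat m) := by
  rw [Hmat, show (m + m) / 2 = m by omega]

section Butterfly

variable {m : ℕ} (M : Matrix (Fin (m + m)) (Fin (m + m)) ℝ) (i : Fin (m + m)) (l : Fin m)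

lemma mul_Hmat_castAdd :
    (M * Hmat (m + m)) i (Fin.castAdd m l) =
      (M i (Fin.castAdd m l) + M i (Fin.natAdd m l)) / √2 := by
  simp only [Hmat_add_self, Matrix.smul_apply, Matrix.mul_apply,
    Fin.sum_univ_add, blk4_castAdd_castAdd, blk4_natAdd_castAdd, Matrix.one_apply,
    mul_ite, mul_one, mul_zero, Finset.sum_ite_eq', Finset.mem_univ,
    if_true, smul_eq_mul]
  ring

lemma mul_Hmat_natAdd :
    (M * Hmat (m + m)) i (Fin.natAdd m l) =
      (M i (Fin.castAdd m l.rev) - M i (Fin.natAdd m l.rev)) / √2 := by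
  simp only [Hmat_add_self, Matrix.smul_apply, Matrix.mul_apply,
    Fin.sum_univ_add, blk4_castAdd_natAdd, blk4_natAdd_natAdd, Matrix.neg_apply, flipMat_apply,
    mul_neg, mul_ite, mul_one, mul_zero, Finset.sum_neg_distrib, Finset.sum_ite_eq',
    Finset.mem_univ, if_true, smul_eq_mul]
  ring

end Butterfly

section EvenOddPermutation

variable {m : ℕ} (M : Matrix (Fin (m + m)) (Fin (m + m)) ℝ) {j : Fin (m + m)} (a : Fin m)
  (k : Fin (m + m))

lemma transpose_Pev_mul_of_even (hj : (j : ℕ) = 2 * a) :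
    ((Pev (m + m))ᵀ * M) j k = M (Fin.castAdd m a) k := by
  have hP : ∀ i, Pev (m + m) i j = if i = Fin.castAdd m a then 1 else 0 := fun i => by
    simp only [Pev, Fin.ext_iff, Fin.val_castAdd]
    split_ifs <;> first | rfl | omega
  simp [Matrix.mul_apply, hP]

lemma transpose_Pev_mul_of_odd (hj : (j : ℕ) = 2 * a + 1) :
    ((Pev (m + m))ᵀ * M) j k = M (Fin.natAdd m a) k := by
  have hP : ∀ i, Pev (m + m) i j = if i = Fin.natAdd m a then 1 else 0 := fun i => by
    simp only [Pev, Fin.ext_iff, Fin.val_natAdd]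
    split_ifs <;> first | rfl | omega
  simp [Matrix.mul_apply, hP]

end EvenOddPermutation

lemma eps_add_self_two_mul (m a : ℕ) : eps (m + m) (2 * a) = eps m a := by
  simp only [eps]
  exact if_congr (by omega) rfl rfl

lemma eps_add_self_two_mul_add_one (m a : ℕ) : eps (m + m) (2 * a + 1) = 1 :=
  if_neg (by omega)

lemma sqrt_two_div_add_self (m : ℕ) : √(2 / ((m + m : ℕ) : ℝ)) = √(2 / m) / √2 := by
  rw [← Real.sqrt_div' _ zero_le_two]
  push_cast
  ring_nf

lemma cos_dct2_rev (N j k : ℕ) (hk : k < N) :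
    cos (((j * (2 * (N - (k + 1)) + 1) : ℕ) : ℝ) * π / (2 * N)) =
      (-1) ^ j * cos (((j * (2 * k + 1) : ℕ) : ℝ) * π / (2 * N)) := by
  have hN : (N : ℝ) ≠ 0 := Nat.cast_ne_zero.mpr (by omega)
  have hangle : (((j * (2 * (N - (k + 1)) + 1) : ℕ) : ℝ) * π / (2 * N)) =
      j * π - ((j * (2 * k + 1) : ℕ) : ℝ) * π / (2 * N) := by
    rw [show 2 * (N - (k + 1)) + 1 = 2 * N - (2 * k + 1) by omega, Nat.mul_sub,
      Nat.cast_sub (Nat.mul_le_mul_left j (by omega))]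
    push_cast
    field_simp
  rw [hangle, cos_sub, cos_nat_mul_pi, sin_nat_mul_pi, zero_mul, add_zero]

lemma C2_apply_rev (N : ℕ) (j k : Fin N) : C2 N j k.rev = (-1) ^ (j : ℕ) * C2 N j k := by
  simp only [C2, Fin.val_rev, cos_dct2_rev N j k k.isLt]
  ring

section DoubleSize

variable {m : ℕ} {j : Fin (m + m)} (a l : Fin m)

lemma C2_add_self_castAdd_of_even (hj : (j : ℕ) = 2 * a) :
    C2 (m + m) j (Fin.castAdd m l) = C2 m a l / √2 := by
  simp only [C2, hj, eps_add_self_two_mul, sqrt_two_div_add_self, Fin.val_castAdd]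
  push_cast
  ring_nf

lemma C2_add_self_castAdd_of_odd (hj : (j : ℕ) = 2 * a + 1) :
    C2 (m + m) j (Fin.castAdd m l) = C4 m a l / √2 := by
  simp only [C2, C4, hj, eps_add_self_two_mul_add_one, sqrt_two_div_add_self, Fin.val_castAdd]
  push_cast
  ring_nf

lemma C2_add_self_natAdd_of_even (hj : (j : ℕ) = 2 * a) :
    C2 (m + m) j (Fin.natAdd m l) = C2 m a l.rev / √2 := by
  rw [Fin.natAdd_eq_rev_castAdd_rev, C2_apply_rev, C2_add_self_castAdd_of_even _ _ hj, hj, pow_mul,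
    neg_one_sq, one_pow, one_mul]

lemma C2_add_self_natAdd_of_odd (hj : (j : ℕ) = 2 * a + 1) :
    C2 (m + m) j (Fin.natAdd m l) = -C4 m a l.rev / √2 := by
  rw [Fin.natAdd_eq_rev_castAdd_rev, C2_apply_rev, C2_add_self_castAdd_of_odd _ _ hj, hj, pow_succ,
    pow_mul, neg_one_sq, one_pow]
  ring

end DoubleSize

theorem dct2_factorization_general (n : ℕ) (hev : Even n) :
    C2 n = (Pev n)ᵀ * blkdiag (C2 (n / 2)) (C4 (n / 2)) * Hmat n := by
  obtain ⟨m, rfl⟩ := hev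
  rw [show (m + m) / 2 = m by omega, Matrix.mul_assoc]
  ext j k
  obtain ⟨a, hj | hj⟩ : ∃ a : Fin m, (j : ℕ) = 2 * a ∨ (j : ℕ) = 2 * a + 1 :=
    ⟨⟨j / 2, by omega⟩, by dsimp only; omega⟩
  · rw [transpose_Pev_mul_of_even _ a _ hj]
    induction k using Fin.addCases with
    | left l =>
      rw [mul_Hmat_castAdd, blkdiag_castAdd_castAdd, blkdiag_castAdd_natAdd, add_zero,
        C2_add_self_castAdd_of_even a l hj]
    | right l =>
      rw [mul_Hmat_natAdd, blkdiag_castAdd_castAdd, blkdiag_castAdd_natAdd, sub_zero,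
        C2_add_self_natAdd_of_even a l hj]
  · rw [transpose_Pev_mul_of_odd _ a _ hj]
    induction k using Fin.addCases with
    | left l =>
      rw [mul_Hmat_castAdd, blkdiag_natAdd_castAdd, blkdiag_natAdd_natAdd, zero_add,
        C2_add_self_castAdd_of_odd a l hj]
    | right l =>
      rw [mul_Hmat_natAdd, blkdiag_natAdd_castAdd, blkdiag_natAdd_natAdd, zero_sub,
        C2_add_self_natAdd_of_odd a l hj]

theorem dct2_factorization (n : ℕ) (hn : 4 ≤ n) (hev : Even n) :
    C2 n = (Pev n)ᵀ * blkdiag (C2 (n / 2)) (C4 (n / 2)) * Hmat n :=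
  dct2_factorization_general n hev
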